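/- arXiv:0901.2451 — 3 statements merged into one kernel-verified Lean document; each statement's English description precedes it below -/
import Mathlib

section
/- Let (R, A) be network data whose static planning problem has optimal objective value ρ and whose dual problem has a unique optimal solution (y, z), which is nonnegative. Let T : [0,∞) → ℝ^𝒥 be any function with T(0) = 0 such that for all 0 ≤ t₁ < t₂ the vector (T(t₂) − T(t₁))/(t₂ − t₁) lies in the allocation set 𝒜. Then the function Y(t) := (1 − ρ)t − Σ_{i∈ℐ} y_i (R T(t))_i is nondecreasing on [0,∞) and satisfies Y(0) = 0. -/
/-!
Between times `s < t` the deviation grows by `(t - s) * ((1 - ρ) - yᵀ R a)`, where `a ∈ 𝒜` is the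
average allocation. Dual feasibility of `(y, z)` bounds `yᵀ R a ≤ 1 - ∑_{k ∈ 𝒦_I} z_k`, and LP strong
duality gives `ρ ≤ ∑_{k ∈ 𝒦_I} z_k`, so the increment is nonnegative.

Strong duality comes from Farkas' lemma: were the static planning problem infeasible at the dual
value `V`, a separating vector would be a recession direction of the dual feasible set along which
the dual objective exceeds `V`. The cone to which Farkas' lemma is applied is closed because every
activity uses some processor, so `x ≥ 0` is bounded coordinatewise by `A x`.
-/

open Finset

section Network

variable {I J K : Type*} [Fintype I] [Fintype J] [Fintype K] [DecidableEq J] [DecidableEq K]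

/-- Assumptions on the capacity consumption matrix `A`: entries in `{0,1}`;
input processors only work on input activities and service processors only on
service activities; every activity uses some processor.  Here `JI` is the set
of input activities (service activities are its complement) and `KI` the set
of input processors (service processors are its complement). -/
def NetData (A : K → J → ℝ) (JI : Finset J) (KI : Finset K) : Prop :=
  (∀ k j, A k j = 0 ∨ A k j = 1) ∧
  (∀ k j, ((k ∈ KI ∧ j ∉ JI) ∨ (k ∉ KI ∧ j ∈ JI)) → A k j = 0) ∧
  (∀ j, ∃ k, A k j = 1)

/-- The allocation set `𝒜`. -/
def Alloc (A : K → J → ℝ) (KI : Finset K) : Set (J → ℝ) :=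
  {a | (∀ j, 0 ≤ a j) ∧ (∀ k, ∑ j, A k j * a j ≤ 1) ∧ ∀ k ∈ KI, ∑ j, A k j * a j = 1}

/-- Feasibility for the static planning problem. -/
def SPPfeas (R : I → J → ℝ) (A : K → J → ℝ) (KI : Finset K) (ρ : ℝ) (x : J → ℝ) : Prop :=
  (∀ i, ∑ j, R i j * x j = 0) ∧ (∀ k ∈ KI, ∑ j, A k j * x j = 1) ∧
  (∀ k, k ∉ KI → ∑ j, A k j * x j ≤ ρ) ∧ (∀ j, 0 ≤ x j)

/-- Optimality for the static planning problem (minimize `ρ`). -/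
def SPPopt (R : I → J → ℝ) (A : K → J → ℝ) (KI : Finset K) (ρ : ℝ) (x : J → ℝ) : Prop :=
  SPPfeas R A KI ρ x ∧ ∀ ρ' x', SPPfeas R A KI ρ' x' → ρ ≤ ρ'

/-- Unique optimality for the static planning problem. -/
def SPPuniqueOpt (R : I → J → ℝ) (A : K → J → ℝ) (KI : Finset K) (ρ : ℝ) (x : J → ℝ) : Prop :=
  SPPopt R A KI ρ x ∧ ∀ ρ' x', SPPopt R A KI ρ' x' → ρ' = ρ ∧ x' = x

/-- Feasibility for the dual of the static planning problem. -/
def Dfeas (R : I → J → ℝ) (A : K → J → ℝ) (JI : Finset J) (KI : Finset K)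
    (y : I → ℝ) (z : K → ℝ) : Prop :=
  (∀ j ∈ JI, ∑ i, y i * R i j ≤ - ∑ k ∈ KI, z k * A k j) ∧
  (∀ j, j ∉ JI → ∑ i, y i * R i j ≤ ∑ k ∈ KIᶜ, z k * A k j) ∧
  (∑ k ∈ KIᶜ, z k = 1) ∧ (∀ k, k ∉ KI → 0 ≤ z k)

/-- Optimality for the dual problem (maximize `∑_{k ∈ KI} z k`). -/
def Dopt (R : I → J → ℝ) (A : K → J → ℝ) (JI : Finset J) (KI : Finset K)
    (y : I → ℝ) (z : K → ℝ) : Prop :=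
  Dfeas R A JI KI y z ∧
    ∀ y' z', Dfeas R A JI KI y' z' → ∑ k ∈ KI, z' k ≤ ∑ k ∈ KI, z k

/-- Unique optimality for the dual problem. -/
def DuniqueOpt (R : I → J → ℝ) (A : K → J → ℝ) (JI : Finset J) (KI : Finset K)
    (y : I → ℝ) (z : K → ℝ) : Prop :=
  Dopt R A JI KI y z ∧ ∀ y' z', Dopt R A JI KI y' z' → y' = y ∧ z' = z

end Network

/-- The lifting vector `ζ^α` determined by `α` and the dual optimum `y`. -/
noncomputable def zeta {I : Type*} [Fintype I] (α y : I → ℝ) : I → ℝ :=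
  fun i => (y i / α i) / ∑ i', (y i') ^ 2 / α i'

/-- A fluid model solution under the maximum pressure policy with parameter `α`. -/
def FluidSol {I J K : Type*} [Fintype I] [Fintype J] [Fintype K] [DecidableEq J] [DecidableEq K]
    (R : I → J → ℝ) (A : K → J → ℝ) (KI : Finset K) (α : I → ℝ)
    (Z : ℝ → I → ℝ) (T : ℝ → J → ℝ) : Prop :=
  (∀ t, 0 ≤ t → ∀ i, Z t i = Z 0 i - ∑ j, R i j * T t j) ∧
  (∀ t, 0 ≤ t → ∀ i, 0 ≤ Z t i) ∧
  (∀ s t, 0 ≤ s → s ≤ t → ∀ k ∈ KI, ∑ j, A k j * (T t j - T s j) = t - s) ∧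
  (∀ s t, 0 ≤ s → s ≤ t → ∀ k, ∑ j, A k j * (T t j - T s j) ≤ t - s) ∧
  (∀ s t, 0 ≤ s → s ≤ t → ∀ j, T s j ≤ T t j) ∧
  (∀ j, T 0 j = 0) ∧
  (∀ t, 0 < t → ∀ (Z' : I → ℝ) (T' : J → ℝ),
    (∀ i, HasDerivAt (fun s => Z s i) (Z' i) t) →
    (∀ j, HasDerivAt (fun s => T s j) (T' j) t) →
    ∑ i, α i * Z t i * ∑ j, R i j * T' j =
      sSup ((fun a => ∑ i, α i * Z t i * ∑ j, R i j * a j) '' Alloc A KI))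

open Matrix

theorem Matrix.isClosed_image_mulVec_nonneg {ι κ : Type*} [Fintype κ] (B : Matrix ι κ ℝ)
    (g : κ → ι) (hdiag : ∀ c, 1 ≤ B (g c) c) (hrow : ∀ c c', 0 ≤ B (g c) c') :
    IsClosed ((B *ᵥ ·) '' Set.Ici 0) := by
  have hle : ∀ x : κ → ℝ, 0 ≤ x → ∀ c, x c ≤ (B *ᵥ x) (g c) := fun x hx c =>
    calc x c ≤ B (g c) c * x c := le_mul_of_one_le_left (hx c) (hdiag c)
      _ ≤ (B *ᵥ x) (g c) := Finset.single_le_sum (f := fun c' => B (g c) c' * x c')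
          (fun c' _ => mul_nonneg (hrow c c') (hx c')) (Finset.mem_univ c)
  refine closure_subset_iff_isClosed.mp fun m hm => ?_
  set U : Set (ι → ℝ) := {m' | ∀ c, m' (g c) < m (g c) + 1}
  have hU : IsOpen U := by
    simp only [U, Set.ofPred_forall]
    exact isOpen_iInter_of_finite fun c => isOpen_lt (continuous_apply _) continuous_const
  have hmU : m ∈ U := fun c => lt_add_one _
  have hsub : U ∩ (B *ᵥ ·) '' Set.Ici 0 ⊆ (B *ᵥ ·) '' Set.Icc 0 (fun c => m (g c) + 1) := by
    rintro _ ⟨hU, x, hx, rfl⟩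
    exact ⟨x, ⟨hx, fun c => (hle x hx c).trans (hU c).le⟩, rfl⟩
  have hcpt : IsCompact ((B *ᵥ ·) '' Set.Icc (0 : κ → ℝ) (fun c => m (g c) + 1)) :=
    isCompact_Icc.image (Continuous.matrix_mulVec continuous_const continuous_id)
  exact Set.image_mono Set.Icc_subset_Ici_self <|
    hcpt.isClosed.closure_subset (closure_mono hsub (hU.inter_closure ⟨hmU, hm⟩))

theorem Matrix.exists_vecMul_nonneg_dotProduct_neg {ι κ : Type*} [Fintype ι] [Fintype κ]
    (B : Matrix ι κ ℝ) (hB : IsClosed ((B *ᵥ ·) '' Set.Ici 0)) {b : ι → ℝ}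
    (hb : b ∉ (B *ᵥ ·) '' Set.Ici 0) :
    ∃ v, 0 ≤ v ᵥ* B ∧ v ⬝ᵥ b < 0 := by
  classical
  let C : ProperCone ℝ (ι → ℝ) := ⟨(PointedCone.positive ℝ (κ → ℝ)).map B.mulVecLin, hB⟩
  obtain ⟨f, hfC, hfb⟩ := C.hyperplane_separation_point (x₀ := b) hb
  obtain ⟨v, hv⟩ := (dotProductEquiv ℝ ι).surjective (f : Module.Dual ℝ (ι → ℝ))
  have hf (m : ι → ℝ) : f m = v ⬝ᵥ m := (LinearMap.congr_fun hv m).symm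
  refine ⟨v, fun c => ?_, by rwa [← hf]⟩
  have := hfC (B *ᵥ Pi.single c 1) ⟨Pi.single c 1, Pi.single_nonneg.mpr zero_le_one, rfl⟩
  rwa [hf, dotProduct_mulVec, dotProduct_single, mul_one] at this

section Duality

variable {I J K : Type*} {R : Matrix I J ℝ} {A : Matrix K J ℝ} {JI : Finset J} {KI : Finset K}

/-- `-1` on input processors and `1` on service processors: with this sign vector both families
of column constraints of the dual read `yᵀ R ≤ (procSign KI * z)ᵀ A`. -/
def procSign [DecidableEq K] (KI : Finset K) : K → ℝ := fun k => if k ∈ KI then -1 else 1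

theorem procSign_mul_self [DecidableEq K] (KI : Finset K) : procSign KI * procSign KI = 1 := by
  ext k
  by_cases hk : k ∈ KI <;> simp [procSign, hk]

theorem NetData.vecMul_procSign_mul_apply_of_mem [Fintype K] [DecidableEq K]
    (hND : NetData A JI KI) (z : K → ℝ) {j : J} (hj : j ∈ JI) :
    ((procSign KI * z) ᵥ* A) j = -∑ k ∈ KI, z k * A k j := by
  have hsvc : ∑ k ∈ KIᶜ, (procSign KI * z) k * A k j = 0 := Finset.sum_eq_zero fun k hk => by
    rw [hND.2.1 k j (.inr ⟨Finset.mem_compl.mp hk, hj⟩), mul_zero]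
  rw [vecMul, dotProduct, ← Finset.sum_add_sum_compl KI, hsvc, add_zero,
    ← Finset.sum_neg_distrib]
  exact Finset.sum_congr rfl fun k hk => by simp [procSign, hk]

theorem NetData.vecMul_procSign_mul_apply_of_notMem [Fintype K] [DecidableEq K]
    (hND : NetData A JI KI) (z : K → ℝ) {j : J} (hj : j ∉ JI) :
    ((procSign KI * z) ᵥ* A) j = ∑ k ∈ KIᶜ, z k * A k j := by
  have hinp : ∑ k ∈ KI, (procSign KI * z) k * A k j = 0 := Finset.sum_eq_zero fun k hk => by
    rw [hND.2.1 k j (.inl ⟨hk, hj⟩), mul_zero]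
  rw [vecMul, dotProduct, ← Finset.sum_add_sum_compl KI, hinp, zero_add]
  exact Finset.sum_congr rfl fun k hk => by simp [procSign, Finset.mem_compl.mp hk]

theorem NetData.dfeas_iff [Fintype I] [Fintype K] [DecidableEq K] (hND : NetData A JI KI)
    {y : I → ℝ} {z : K → ℝ} :
    Dfeas R A JI KI y z ↔
      y ᵥ* R ≤ (procSign KI * z) ᵥ* A ∧ ∑ k ∈ KIᶜ, z k = 1 ∧ ∀ k ∉ KI, 0 ≤ z k := by
  have hcol : y ᵥ* R ≤ (procSign KI * z) ᵥ* A ↔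
      (∀ j ∈ JI, ∑ i, y i * R i j ≤ -∑ k ∈ KI, z k * A k j) ∧
        ∀ j ∉ JI, ∑ i, y i * R i j ≤ ∑ k ∈ KIᶜ, z k * A k j := by
    refine ⟨fun h => ⟨fun j hj => ?_, fun j hj => ?_⟩, fun h j => ?_⟩
    · exact (h j).trans_eq (hND.vecMul_procSign_mul_apply_of_mem z hj)
    · exact (h j).trans_eq (hND.vecMul_procSign_mul_apply_of_notMem z hj)
    · by_cases hj : j ∈ JI
      · exact (h.1 j hj).trans_eq (hND.vecMul_procSign_mul_apply_of_mem z hj).symm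
      · exact (h.2 j hj).trans_eq (hND.vecMul_procSign_mul_apply_of_notMem z hj).symm
  rw [hcol, and_assoc]
  exact Iff.rfl

theorem NetData.dotProduct_mulVec_le [Fintype I] [Fintype J] [Fintype K] [DecidableEq K]
    (hND : NetData A JI KI) {y : I → ℝ} {z : K → ℝ} (hf : Dfeas R A JI KI y z)
    {a : J → ℝ} (ha : a ∈ Alloc A KI) :
    y ⬝ᵥ (R *ᵥ a) ≤ 1 - ∑ k ∈ KI, z k := by
  obtain ⟨hcol, hsum, hz⟩ := hND.dfeas_iff.mp hf
  obtain ⟨ha0, hle, hKI⟩ := ha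
  calc y ⬝ᵥ (R *ᵥ a) = (y ᵥ* R) ⬝ᵥ a := dotProduct_mulVec y R a
    _ ≤ ((procSign KI * z) ᵥ* A) ⬝ᵥ a := dotProduct_le_dotProduct_of_nonneg_right hcol ha0
    _ = (procSign KI * z) ⬝ᵥ (A *ᵥ a) := (dotProduct_mulVec _ A a).symm
    _ = -∑ k ∈ KI, z k + ∑ k ∈ KIᶜ, z k * (A *ᵥ a) k := by
      rw [dotProduct, ← Finset.sum_add_sum_compl KI, ← Finset.sum_neg_distrib]
      congr 1 <;> refine Finset.sum_congr rfl fun k hk => ?_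
      · simp [procSign, hk, hKI k hk, mulVec, dotProduct]
      · simp [procSign, Finset.mem_compl.mp hk]
    _ ≤ -∑ k ∈ KI, z k + ∑ k ∈ KIᶜ, z k := by
      gcongr with k hk
      exact mul_le_of_le_one_right (hz k (Finset.mem_compl.mp hk)) (hle k)
    _ = 1 - ∑ k ∈ KI, z k := by rw [hsum]; ring

theorem NetData.dotProduct_mulVec_sub_le [Fintype I] [Fintype J] [Fintype K] [DecidableEq K]
    (hND : NetData A JI KI) {y : I → ℝ} {z : K → ℝ} (hf : Dfeas R A JI KI y z)
    {u v : J → ℝ} {h : ℝ} (hh : 0 < h) (ha : (fun j => (u j - v j) / h) ∈ Alloc A KI) :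
    y ⬝ᵥ (R *ᵥ u) - y ⬝ᵥ (R *ᵥ v) ≤ h * (1 - ∑ k ∈ KI, z k) := by
  have hquot : (fun j => (u j - v j) / h) = h⁻¹ • (u - v) := funext fun j => div_eq_inv_mul _ _
  have hrate := hND.dotProduct_mulVec_le hf ha
  rw [hquot, mulVec_smul, dotProduct_smul, smul_eq_mul, mulVec_sub, dotProduct_sub,
    inv_mul_le_iff₀ hh] at hrate
  exact hrate

theorem NetData.dfeas_smul_add [Fintype I] [Fintype K] [DecidableEq K] (hND : NetData A JI KI)
    {y y' : I → ℝ} {z z' : K → ℝ} (hf : Dfeas R A JI KI y z)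
    (hR : y' ᵥ* R ≤ (procSign KI * z') ᵥ* A) (hz' : ∀ k ∉ KI, 0 ≤ z' k) :
    Dfeas R A JI KI ((1 + ∑ k ∈ KIᶜ, z' k)⁻¹ • (y + y'))
      ((1 + ∑ k ∈ KIᶜ, z' k)⁻¹ • (z + z')) := by
  obtain ⟨hcol, hsum, hz⟩ := hND.dfeas_iff.mp hf
  have hpos : 0 < 1 + ∑ k ∈ KIᶜ, z' k := add_pos_of_pos_of_nonneg one_pos
    (Finset.sum_nonneg fun k hk => hz' k (Finset.mem_compl.mp hk))
  set c := (1 + ∑ k ∈ KIᶜ, z' k)⁻¹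
  refine hND.dfeas_iff.mpr ⟨?_, ?_, fun k hk => ?_⟩
  · rw [smul_vecMul, add_vecMul, mul_smul_comm, mul_add, smul_vecMul, add_vecMul]
    exact smul_le_smul_of_nonneg_left (add_le_add hcol hR) (inv_pos.mpr hpos).le
  · simp only [Pi.smul_apply, Pi.add_apply, smul_eq_mul, ← Finset.mul_sum,
      Finset.sum_add_distrib, hsum]
    exact inv_mul_cancel₀ hpos.ne'
  · exact mul_nonneg (inv_pos.mpr hpos).le (add_nonneg (hz k hk) (hz' k hk))

/-- The static planning problem at objective value `V` in the standard form `M x = b, x ≥ 0`,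
with one slack variable per service processor. -/
def sppMatrix [DecidableEq K] (R : Matrix I J ℝ) (A : Matrix K J ℝ) (KI : Finset K) :
    Matrix (I ⊕ K) (J ⊕ {k // k ∉ KI}) ℝ :=
  fromBlocks R 0 A (of fun k k' => if k = k' then 1 else 0)

def sppRhs [DecidableEq K] (KI : Finset K) (V : ℝ) : I ⊕ K → ℝ :=
  Sum.elim 0 fun k => if k ∈ KI then 1 else V

theorem sppFeas_of_mulVec_sppMatrix_eq [Fintype J] [Fintype K] [DecidableEq K] {V : ℝ}
    {x : J ⊕ {k // k ∉ KI} → ℝ} (hx : 0 ≤ x) (h : sppMatrix R A KI *ᵥ x = sppRhs KI V) :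
    SPPfeas R A KI V (x ∘ Sum.inl) := by
  set S : Matrix K {k // k ∉ KI} ℝ := of fun k k' => if k = k' then 1 else 0
  have hrow (k : K) :
      (A *ᵥ (x ∘ Sum.inl)) k + (S *ᵥ (x ∘ Sum.inr)) k = if k ∈ KI then 1 else V := by
    simpa only [sppMatrix, sppRhs, fromBlocks_mulVec, Sum.elim_inr, Pi.add_apply]
      using congrFun h (.inr k)
  refine ⟨fun i => ?_, fun k hk => ?_, fun k hk => ?_, fun j => hx (.inl j)⟩
  · have := congrFun h (.inl i)
    simp only [sppMatrix, sppRhs, fromBlocks_mulVec, zero_mulVec, add_zero, Sum.elim_inl,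
      Pi.zero_apply] at this
    exact this
  · have hslack : (S *ᵥ (x ∘ Sum.inr)) k = 0 := Finset.sum_eq_zero fun k' _ => by
      simp [S, ne_of_mem_of_not_mem hk k'.2]
    have := hrow k
    rw [hslack, add_zero, if_pos hk] at this
    exact this
  · have hslack : 0 ≤ (S *ᵥ (x ∘ Sum.inr)) k := Finset.sum_nonneg fun k' _ =>
      mul_nonneg (by simp only [S, of_apply]; split_ifs <;> norm_num) (hx _)
    have := hrow k
    rw [if_neg hk] at this
    exact le_of_add_le_of_nonneg_left this.le hslack

theorem NetData.isClosed_image_mulVec_sppMatrix [Fintype J] [Fintype K] [DecidableEq K]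
    (hND : NetData A JI KI) : IsClosed ((sppMatrix R A KI *ᵥ ·) '' Set.Ici 0) := by
  choose kj hkj using hND.2.2
  have hrow (k : K) : ∀ c, 0 ≤ sppMatrix R A KI (.inr k) c := by
    rintro (j | k')
    · rcases hND.1 k j with h | h <;> simp [sppMatrix, h]
    · by_cases h : k = k' <;> simp [sppMatrix, h]
  refine (sppMatrix R A KI).isClosed_image_mulVec_nonneg
    (Sum.elim (.inr ∘ kj) fun k => .inr k) ?_ ?_
  · rintro (j | k') <;> simp [sppMatrix, hkj]
  · rintro (j | k') <;> exact hrow _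

theorem NetData.exists_dual_ray_of_forall_not_sppFeas [Fintype I] [Fintype J] [Fintype K]
    [DecidableEq K] (hND : NetData A JI KI) {V : ℝ} (h : ∀ x, ¬SPPfeas R A KI V x) :
    ∃ (y' : I → ℝ) (z' : K → ℝ), y' ᵥ* R ≤ (procSign KI * z') ᵥ* A ∧ (∀ k ∉ KI, 0 ≤ z' k) ∧
      V * ∑ k ∈ KIᶜ, z' k < ∑ k ∈ KI, z' k := by
  obtain ⟨v, hv, hvb⟩ := (sppMatrix R A KI).exists_vecMul_nonneg_dotProduct_neg
    hND.isClosed_image_mulVec_sppMatrix (b := sppRhs KI V)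
    fun ⟨x, hx, hMx⟩ => h _ (sppFeas_of_mulVec_sppMatrix_eq hx hMx)
  set w := v ∘ Sum.inr
  have hcol (j : J) : 0 ≤ ((v ∘ Sum.inl) ᵥ* R) j + (w ᵥ* A) j := by
    simpa [sppMatrix, vecMul_fromBlocks] using hv (.inl j)
  have hslack (k : K) (hk : k ∉ KI) : 0 ≤ w k := by
    simpa [sppMatrix, vecMul, dotProduct, w] using hv (.inr ⟨k, hk⟩)
  have hobj : ∑ k ∈ KI, w k + V * ∑ k ∈ KIᶜ, w k < 0 := by
    rw [dotProduct, Fintype.sum_sum_type, ← Finset.sum_add_sum_compl KI] at hvb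
    have hI : ∑ i, v (.inl i) * sppRhs KI V (.inl i) = 0 := by simp [sppRhs]
    have hKI : ∑ k ∈ KI, v (.inr k) * sppRhs (I := I) KI V (.inr k) = ∑ k ∈ KI, w k :=
      Finset.sum_congr rfl fun k hk => by simp [sppRhs, hk, w]
    have hKIc :
        ∑ k ∈ KIᶜ, v (.inr k) * sppRhs (I := I) KI V (.inr k) = V * ∑ k ∈ KIᶜ, w k := by
      rw [Finset.mul_sum]
      exact Finset.sum_congr rfl fun k hk => by
        simp [sppRhs, Finset.mem_compl.mp hk, w, mul_comm]
    linarith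
  refine ⟨-(v ∘ Sum.inl), procSign KI * w, ?_, fun k hk => ?_, ?_⟩
  · rw [← mul_assoc, procSign_mul_self, one_mul, neg_vecMul]
    exact fun j => neg_le_iff_add_nonneg'.mpr (hcol j)
  · simpa [procSign, hk] using hslack k hk
  · have hinp : ∑ k ∈ KI, (procSign KI * w) k = -∑ k ∈ KI, w k := by
      rw [← Finset.sum_neg_distrib]
      exact Finset.sum_congr rfl fun k hk => by simp [procSign, hk]
    have hsvc : ∑ k ∈ KIᶜ, (procSign KI * w) k = ∑ k ∈ KIᶜ, w k :=
      Finset.sum_congr rfl fun k hk => by simp [procSign, Finset.mem_compl.mp hk]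
    rw [hinp, hsvc]
    linarith

theorem NetData.le_sum_of_sppOpt_of_dopt [Fintype I] [Fintype J] [Fintype K] [DecidableEq K]
    (hND : NetData A JI KI) {ρ : ℝ} {x : J → ℝ} (hSPP : SPPopt R A KI ρ x) {y : I → ℝ}
    {z : K → ℝ} (hD : Dopt R A JI KI y z) :
    ρ ≤ ∑ k ∈ KI, z k := by
  by_contra! hlt
  obtain ⟨y', z', hR, hz', hgain⟩ := hND.exists_dual_ray_of_forall_not_sppFeas
    fun x' hx' => (hSPP.2 _ x' hx').not_gt hlt
  have hpos : 0 < 1 + ∑ k ∈ KIᶜ, z' k := add_pos_of_pos_of_nonneg one_pos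
    (Finset.sum_nonneg fun k hk => hz' k (Finset.mem_compl.mp hk))
  have hle := hD.2 _ _ (hND.dfeas_smul_add hD.1 hR hz')
  simp only [Pi.smul_apply, Pi.add_apply, smul_eq_mul, ← Finset.mul_sum,
    Finset.sum_add_distrib] at hle
  rw [inv_mul_le_iff₀ hpos] at hle
  linarith

end Duality

theorem deviation_nondecreasing_general {I J K : Type*} [Fintype I] [Fintype J] [Fintype K] [DecidableEq K]
    (R : I → J → ℝ) (A : K → J → ℝ) (JI : Finset J) (KI : Finset K)
    (hND : NetData A JI KI)
    (ρ : ℝ) (hSPP : ∃ x, SPPopt R A KI ρ x)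
    (y : I → ℝ) (z : K → ℝ) (hD : DuniqueOpt R A JI KI y z)
    (T : ℝ → J → ℝ) (hT0 : ∀ j, T 0 j = 0)
    (hTalloc : ∀ t₁ t₂ : ℝ, 0 ≤ t₁ → t₁ < t₂ →
      (fun j => (T t₂ j - T t₁ j) / (t₂ - t₁)) ∈ Alloc A KI) :
    ((1 - ρ) * 0 - ∑ i, y i * ∑ j, R i j * T 0 j = 0) ∧
    ∀ s t : ℝ, 0 ≤ s → s ≤ t →
      (1 - ρ) * s - ∑ i, y i * ∑ j, R i j * T s j ≤
        (1 - ρ) * t - ∑ i, y i * ∑ j, R i j * T t j := by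
  refine ⟨by simp [hT0], fun s t hs hst => ?_⟩
  obtain rfl | hlt := hst.eq_or_lt
  · exact le_rfl
  obtain ⟨x, hx⟩ := hSPP
  have hρ := hND.le_sum_of_sppOpt_of_dopt hx hD.1
  have hincr := hND.dotProduct_mulVec_sub_le hD.1.1 (sub_pos.mpr hlt) (hTalloc s t hs hlt)
  change (1 - ρ) * s - y ⬝ᵥ (R *ᵥ T s) ≤ (1 - ρ) * t - y ⬝ᵥ (R *ᵥ T t)
  linarith [mul_le_mul_of_nonneg_left hρ (sub_pos.mpr hlt).le]

/-- Lemma 2: the deviation process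
`Y(t) = (1 - ρ) t - ∑ᵢ yᵢ (R T(t))ᵢ` is nondecreasing and starts at `0`. -/
theorem deviation_nondecreasing {I J K : Type*} [Fintype I] [Fintype J] [Fintype K] [DecidableEq J] [DecidableEq K]
    (R : I → J → ℝ) (A : K → J → ℝ) (JI : Finset J) (KI : Finset K)
    (hND : NetData A JI KI)
    (ρ : ℝ) (hSPP : ∃ x, SPPopt R A KI ρ x)
    (y : I → ℝ) (z : K → ℝ) (hD : DuniqueOpt R A JI KI y z)
    (hynn : ∀ i, 0 ≤ y i) (hznn : ∀ k, 0 ≤ z k)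
    (T : ℝ → J → ℝ) (hT0 : ∀ j, T 0 j = 0)
    (hTalloc : ∀ t₁ t₂ : ℝ, 0 ≤ t₁ → t₁ < t₂ →
      (fun j => (T t₂ j - T t₁ j) / (t₂ - t₁)) ∈ Alloc A KI) :
    ((1 - ρ) * 0 - ∑ i, y i * ∑ j, R i j * T 0 j = 0) ∧
    ∀ s t : ℝ, 0 ≤ s → s ≤ t →
      (1 - ρ) * s - ∑ i, y i * ∑ j, R i j * T s j ≤
        (1 - ρ) * t - ∑ i, y i * ∑ j, R i j * T t j :=
  deviation_nondecreasing_general R A JI KI hND ρ hSPP y z hD T hT0 hTalloc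
end

section
/- Let ℐ (of size I) and 𝒥 (of size J) be finite index sets, R, R′ ∈ ℝ^{ℐ×𝒥}, y* ∈ ℝ^ℐ nonzero, α ∈ ℝ^ℐ with α_i > 0, and ζ^α_i = (y*_i/α_i)/(Σ_{i'} (y*_{i'})²/α_{i'}); set κ₁ = Σ_i (y*_i)²/α_i. Let E be a finite set of vectors a ∈ ℝ^𝒥 with 0 ≤ a_j ≤ 1, let a* ∈ E attain max_{a∈E} Σ_{i,j} y*_i R_{ij} a_j, set E* = {a ∈ E : Σ_{i,j} y*_i R_{ij} a_j = Σ_{i,j} y*_i R_{ij} a*_j}, assume E ≠ E*, and set ε₁ = Σ_{i,j} y*_i R_{ij} a*_j − max_{a∈E∖E*} Σ_{i,j} y*_i R_{ij} a_j > 0. Let κ₀ ≥ max_{a∈E} |R′a| (max norm), and let ε₀ > 0 satisfy ε₀ ≤ ε₁/(3(|α|·κ₀·κ₁·I + J)). Suppose z ∈ ℝ^ℐ with z ≥ 0 and w := Σ_i y*_i z_i > 0 satisfy |z/w − ζ^α| ≤ ε₀ in the max norm, and suppose |Σ_i y*_i (R′_{ij} − R_{ij})| ≤ ε₀ for every j ∈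 𝒥. Then for every a ∈ E ∖ E*: Σ_i α_i z_i (R′a*)_i − Σ_i α_i z_i (R′a)_i ≥ w·(ε₁ − 2(|α|·κ₀·κ₁·I + J)·ε₀)/κ₁ > 0. -/
section

open Finset Matrix

variable {I J : Type*}

lemma sum_sq_div_pos [Fintype I] {y α : I → ℝ} (hy : y ≠ 0) (hα : ∀ i, 0 < α i) :
    0 < ∑ i, y i ^ 2 / α i := by
  obtain ⟨i, hi⟩ := Function.ne_iff.mp hy
  exact sum_pos' (fun j _ => div_nonneg (sq_nonneg _) (hα j).le)
    ⟨i, mem_univ _, div_pos (pow_two_pos_of_ne_zero hi) (hα i)⟩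

lemma mul_zeta [Fintype I] {α : I → ℝ} (y : I → ℝ) {i : I} (hα : α i ≠ 0) :
    α i * zeta α y i = y i / ∑ i', y i' ^ 2 / α i' := by
  unfold zeta
  field_simp

lemma mul_smul_zeta_add_dotProduct [Fintype I] {α : I → ℝ} (hα : ∀ i, α i ≠ 0)
    (y d p : I → ℝ) (w : ℝ) :
    (α * w • (zeta α y + d)) ⬝ᵥ p = w * (y ⬝ᵥ p / ∑ i, y i ^ 2 / α i + (α * d) ⬝ᵥ p) := by
  simp only [dotProduct, Pi.mul_apply, Pi.smul_apply, Pi.add_apply, smul_eq_mul]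
  rw [sum_div, ← sum_add_distrib, mul_sum]
  refine sum_congr rfl fun i _ => ?_
  linear_combination (w * p i) * mul_zeta y (hα i)

lemma abs_sum_le_card_mul [Fintype I] {f : I → ℝ} {C : ℝ} (h : ∀ i, |f i| ≤ C) :
    |∑ i, f i| ≤ Fintype.card I * C :=
  (abs_sum_le_sum_abs _ _).trans <| by simpa using sum_le_card_nsmul univ _ _ fun i _ => h i

lemma le_mul_smul_zeta_add_dotProduct [Fintype I] {α y d p : I → ℝ} {w M ε q : ℝ}
    (hα : ∀ i, α i ≠ 0) (hκ : 0 < ∑ i, y i ^ 2 / α i) (hw : 0 ≤ w)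
    (hM : ∀ i, |α i| ≤ M) (hd : ∀ i, |d i| ≤ ε) (hp : ∀ i, |p i| ≤ q) :
    w * (y ⬝ᵥ p - Fintype.card I * (M * ε * q) * ∑ i, y i ^ 2 / α i) / ∑ i, y i ^ 2 / α i ≤
      (α * w • (zeta α y + d)) ⬝ᵥ p := by
  rw [mul_smul_zeta_add_dotProduct hα, mul_div_assoc]
  gcongr
  have hT : |(α * d) ⬝ᵥ p| ≤ Fintype.card I * (M * ε * q) :=
    abs_sum_le_card_mul fun i => by
      have hM0 : 0 ≤ M := (abs_nonneg _).trans (hM i)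
      have hε0 : 0 ≤ ε := (abs_nonneg _).trans (hd i)
      rw [Pi.mul_apply, abs_mul, abs_mul]
      gcongr
      exacts [hM i, hd i, hp i]
  rw [sub_div, mul_div_cancel_right₀ _ hκ.ne']
  linarith [neg_le_of_abs_le hT]

lemma sum_sum_mul_eq_dotProduct_mulVec [Fintype I] [Fintype J] (y : I → ℝ)
    (A : Matrix I J ℝ) (a : J → ℝ) : ∑ i, ∑ j, y i * A i j * a j = y ⬝ᵥ (A *ᵥ a) := by
  rw [dot_mulVec_eq_sum_sum, sum_comm]

lemma abs_dotProduct_mulVec_sub_le [Fintype I] [Fintype J] {y : I → ℝ} {A B : Matrix I J ℝ}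
    {c : J → ℝ} {ε : ℝ} (hc : ∀ j, |c j| ≤ 1) (hAB : ∀ j, |(y ᵥ* (A - B)) j| ≤ ε) :
    |y ⬝ᵥ (A *ᵥ c) - y ⬝ᵥ (B *ᵥ c)| ≤ Fintype.card J * ε := by
  rw [← dotProduct_sub, ← sub_mulVec, dotProduct_mulVec]
  refine abs_sum_le_card_mul fun j => ?_
  rw [abs_mul]
  simpa using mul_le_mul (hAB j) (hc j) (abs_nonneg _) ((abs_nonneg _).trans (hAB j))

lemma abs_mulVec_sub_le [Fintype J] {A : Matrix I J ℝ} {a b : J → ℝ} {κ : ℝ}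
    (ha : ∀ i, |(A *ᵥ a) i| ≤ κ) (hb : ∀ i, |(A *ᵥ b) i| ≤ κ) (i : I) :
    |(A *ᵥ (a - b)) i| ≤ 2 * κ := by
  rw [mulVec_sub, Pi.sub_apply, two_mul]
  exact (abs_sub _ _).trans (add_le_add (ha i) (hb i))

lemma sub_two_mul_mul_pos_of_le_div {K ε₀ ε₁ : ℝ} (hK : 0 ≤ K) (hε₀ : 0 < ε₀)
    (h : ε₀ ≤ ε₁ / (3 * K)) : 0 < ε₁ - 2 * K * ε₀ := by
  obtain ⟨hε₁, h3K⟩ : 0 < ε₁ ∧ 0 < 3 * K :=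
    (div_pos_iff.mp (hε₀.trans_le h)).resolve_right fun h => by linarith [h.2]
  linarith [(le_div_iff₀ h3K).mp h]

end

open Finset in
theorem pressure_gap_general {I J : Type*} [Fintype I] [Fintype J] [Nonempty I]
    (R R' : I → J → ℝ) (ystar α : I → ℝ) (hy0 : ystar ≠ 0) (hα : ∀ i, 0 < α i)
    (E : Finset (J → ℝ)) (hE : ∀ a ∈ E, ∀ j, 0 ≤ a j ∧ a j ≤ 1)
    (astar : J → ℝ) (hastarE : astar ∈ E)
    (ε₁ : ℝ)
    (hε₁ : ∀ a ∈ E, ∑ i, ∑ j, ystar i * R i j * a j ≠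
        ∑ i, ∑ j, ystar i * R i j * astar j →
      ∑ i, ∑ j, ystar i * R i j * a j ≤
        (∑ i, ∑ j, ystar i * R i j * astar j) - ε₁)
    (κ₀ : ℝ) (hκ₀ : ∀ a ∈ E, ∀ i, |∑ j, R' i j * a j| ≤ κ₀)
    (ε₀ : ℝ) (hε₀pos : 0 < ε₀)
    (hε₀ : ε₀ ≤ ε₁ / (3 * ((univ.sup' univ_nonempty fun i => |α i|) * κ₀ *
      (∑ i, ystar i ^ 2 / α i) * (Fintype.card I) + (Fintype.card J))))
    (z : I → ℝ)
    (w : ℝ) (hwpos : 0 < w)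
    (hclose : ∀ i, |z i / w - zeta α ystar i| ≤ ε₀)
    (hRclose : ∀ j, |∑ i, ystar i * (R' i j - R i j)| ≤ ε₀) :
    ∀ a ∈ E, ∑ i, ∑ j, ystar i * R i j * a j ≠
        ∑ i, ∑ j, ystar i * R i j * astar j →
      w * (ε₁ - 2 * ((univ.sup' univ_nonempty fun i => |α i|) * κ₀ *
            (∑ i, ystar i ^ 2 / α i) * (Fintype.card I) + (Fintype.card J)) * ε₀) /
          (∑ i, ystar i ^ 2 / α i) ≤
        (∑ i, α i * z i * ∑ j, R' i j * astar j) -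
          (∑ i, α i * z i * ∑ j, R' i j * a j) ∧
      0 < w * (ε₁ - 2 * ((univ.sup' univ_nonempty fun i => |α i|) * κ₀ *
            (∑ i, ystar i ^ 2 / α i) * (Fintype.card I) + (Fintype.card J)) * ε₀) /
          (∑ i, ystar i ^ 2 / α i) := by
  open Matrix in
  intro a ha hne
  set κ₁ := ∑ i, ystar i ^ 2 / α i
  set M := univ.sup' univ_nonempty fun i => |α i|
  have hκ₁ : 0 < κ₁ := sum_sq_div_pos hy0 hα
  have hM : ∀ i, |α i| ≤ M := fun i => le_sup' (fun i => |α i|) (mem_univ i)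
  have hM0 : 0 ≤ M := (abs_nonneg _).trans (hM (Classical.arbitrary I))
  have hκ₀0 : 0 ≤ κ₀ := (abs_nonneg _).trans (hκ₀ astar hastarE (Classical.arbitrary I))
  have hgap := sub_two_mul_mul_pos_of_le_div (by positivity) hε₀pos hε₀
  refine ⟨?_, by positivity⟩
  obtain ⟨d, hd, rfl⟩ : ∃ d : I → ℝ, (∀ i, |d i| ≤ ε₀) ∧ z = w • (zeta α ystar + d) :=
    ⟨fun i => z i / w - zeta α ystar i, hclose, by
      ext i
      simp only [Pi.smul_apply, Pi.add_apply, add_sub_cancel, smul_eq_mul]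
      field_simp⟩
  have hyp : ε₁ - Fintype.card J * ε₀ ≤ ystar ⬝ᵥ (R' *ᵥ (astar - a)) := by
    have hR := abs_dotProduct_mulVec_sub_le (A := R') (B := R) (c := astar - a)
      (fun j => abs_sub_le_of_nonneg_of_le (hE astar hastarE j).1 (hE astar hastarE j).2
        (hE a ha j).1 (hE a ha j).2) hRclose
    rw [mulVec_sub R astar a, dotProduct_sub, ← sum_sum_mul_eq_dotProduct_mulVec ystar R a,
      ← sum_sum_mul_eq_dotProduct_mulVec ystar R astar] at hR
    linarith [(abs_le.mp hR).1, hε₁ a ha hne]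
  calc w * (ε₁ - 2 * (M * κ₀ * κ₁ * Fintype.card I + Fintype.card J) * ε₀) / κ₁
      ≤ w * (ystar ⬝ᵥ (R' *ᵥ (astar - a)) - Fintype.card I * (M * ε₀ * (2 * κ₀)) * κ₁) / κ₁ := by
        gcongr w * ?_ / _
        linear_combination hyp + mul_nonneg (Nat.cast_nonneg (Fintype.card J)) hε₀pos.le
    _ ≤ (α * w • (zeta α ystar + d)) ⬝ᵥ (R' *ᵥ (astar - a)) :=
        le_mul_smul_zeta_add_dotProduct (fun i => (hα i).ne') hκ₁ hwpos.le hM hd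
          (abs_mulVec_sub_le (hκ₀ astar hastarE) (hκ₀ a ha))
    _ = _ := by
        rw [mulVec_sub R' astar a, dotProduct_sub]
        rfl

open Finset in
/-- The separation estimate (7.36)-(7.37) in the proof of Proposition 9:
near the lifted state, non-maximizing extreme allocations have strictly
smaller network pressure. -/
theorem pressure_gap {I J : Type*} [Fintype I] [Fintype J] [Nonempty I]
    (R R' : I → J → ℝ) (ystar α : I → ℝ) (hy0 : ystar ≠ 0) (hα : ∀ i, 0 < α i)
    (E : Finset (J → ℝ)) (hE : ∀ a ∈ E, ∀ j, 0 ≤ a j ∧ a j ≤ 1)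
    (astar : J → ℝ) (hastarE : astar ∈ E)
    (hastar : ∀ a ∈ E, ∑ i, ∑ j, ystar i * R i j * a j ≤
      ∑ i, ∑ j, ystar i * R i j * astar j)
    (hEne : ∃ a ∈ E, ∑ i, ∑ j, ystar i * R i j * a j ≠
      ∑ i, ∑ j, ystar i * R i j * astar j)
    (ε₁ : ℝ) (hε₁pos : 0 < ε₁)
    (hε₁ : ∀ a ∈ E, ∑ i, ∑ j, ystar i * R i j * a j ≠
        ∑ i, ∑ j, ystar i * R i j * astar j →
      ∑ i, ∑ j, ystar i * R i j * a j ≤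
        (∑ i, ∑ j, ystar i * R i j * astar j) - ε₁)
    (κ₀ : ℝ) (hκ₀ : ∀ a ∈ E, ∀ i, |∑ j, R' i j * a j| ≤ κ₀)
    (ε₀ : ℝ) (hε₀pos : 0 < ε₀)
    (hε₀ : ε₀ ≤ ε₁ / (3 * ((univ.sup' univ_nonempty fun i => |α i|) * κ₀ *
      (∑ i, ystar i ^ 2 / α i) * (Fintype.card I) + (Fintype.card J))))
    (z : I → ℝ) (hz : ∀ i, 0 ≤ z i)
    (w : ℝ) (hwdef : w = ∑ i, ystar i * z i) (hwpos : 0 < w)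
    (hclose : ∀ i, |z i / w - zeta α ystar i| ≤ ε₀)
    (hRclose : ∀ j, |∑ i, ystar i * (R' i j - R i j)| ≤ ε₀) :
    ∀ a ∈ E, ∑ i, ∑ j, ystar i * R i j * a j ≠
        ∑ i, ∑ j, ystar i * R i j * astar j →
      w * (ε₁ - 2 * ((univ.sup' univ_nonempty fun i => |α i|) * κ₀ *
            (∑ i, ystar i ^ 2 / α i) * (Fintype.card I) + (Fintype.card J)) * ε₀) /
          (∑ i, ystar i ^ 2 / α i) ≤
        (∑ i, α i * z i * ∑ j, R' i j * astar j) -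
          (∑ i, α i * z i * ∑ j, R' i j * a j) ∧
      0 < w * (ε₁ - 2 * ((univ.sup' univ_nonempty fun i => |α i|) * κ₀ *
            (∑ i, ystar i ^ 2 / α i) * (Fintype.card I) + (Fintype.card J)) * ε₀) /
          (∑ i, ystar i ^ 2 / α i) :=
  pressure_gap_general R R' ystar α hy0 hα E hE astar hastarE ε₁ hε₁ κ₀ hκ₀ ε₀ hε₀pos hε₀ z w hwpos
    hclose hRclose
end

section
/- Let (R, A) be network data whose static planning problem has a unique optimal solution (ρ*, x*) with ρ* = 1. Let (Z̄, T̄) be a fluid model solution under the maximum pressure policy with parameter α (α_i > 0 for all i) such that Z̄(0) = 0. Then Z̄(t) = 0 for all t ≥ 0, and T̄(t) = x*·t for all t ≥ 0. -/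
/-!
Along a fluid model solution, `V = ∑ α_i Z̄_i²` is absolutely continuous (each `T̄_j` is
1-Lipschitz), and wherever `T̄` is differentiable,
`V' = -2 (α × Z̄) · (R T̄') = -2 max_{a ∈ 𝒜} (α × Z̄) · (R a) ≤ 0`,
because the optimal plan `x*` lies in `𝒜` and has `R x* = 0`. Hence `V(t) ≤ V(0) = 0`, so
`Z̄ ≡ 0`. Then `R T̄(t) = 0`, so `T̄(t)/t` is feasible, hence optimal, for the static planning
problem with `ρ = 1`, and uniqueness gives `T̄(t) = x* t`.
-/

open Finset

open Set MeasureTheory Filter Topology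

namespace AbsolutelyContinuousOnInterval

variable {F : Type*} [NormedAddCommGroup F] {a b : ℝ}

theorem congr {f g : ℝ → F} (hf : AbsolutelyContinuousOnInterval f a b)
    (h : EqOn f g (uIcc a b)) : AbsolutelyContinuousOnInterval g a b := by
  refine hf.congr' ?_
  filter_upwards [mem_inf_of_right (mem_principal_self _)] with E hE
  refine Finset.sum_congr rfl fun i hi => ?_
  rw [h (hE.1 i hi).1, h (hE.1 i hi).2]

theorem const (c : F) : AbsolutelyContinuousOnInterval (fun _ : ℝ => c) a b :=
  (LipschitzWith.const c).lipschitzOnWith.absolutelyContinuousOnInterval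

theorem finset_sum {ι : Type*} (s : Finset ι) {f : ι → ℝ → F}
    (hf : ∀ i ∈ s, AbsolutelyContinuousOnInterval (f i) a b) :
    AbsolutelyContinuousOnInterval (fun x => ∑ i ∈ s, f i x) a b := by
  classical
  induction s using Finset.induction_on with
  | empty => simpa using const (0 : F)
  | insert i s hi ih =>
    simp only [Finset.sum_insert hi]
    exact (hf i (s.mem_insert_self i)).fun_add
      (ih fun j hj => hf j (Finset.mem_insert_of_mem hj))

theorem le_of_ae_deriv_nonpos {f : ℝ → ℝ} (hf : AbsolutelyContinuousOnInterval f a b)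
    (hab : a ≤ b) (h : ∀ᵐ x, x ∈ Ioo a b → deriv f x ≤ 0) : f b ≤ f a := by
  have hneg : 0 ≤ᵐ[volume.restrict (Icc a b)] fun x => -deriv f x := by
    rw [EventuallyLE, ← Measure.restrict_congr_set Ioo_ae_eq_Icc,
      ae_restrict_iff' measurableSet_Ioo]
    filter_upwards [h] with x hx hmem using neg_nonneg.2 (hx hmem)
  have := intervalIntegral.integral_nonneg_of_ae_restrict hab hneg
  rw [intervalIntegral.integral_neg, hf.integral_deriv_eq_sub] at this
  linarith

end AbsolutelyContinuousOnInterval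

section StaticPlanning

variable {I J K : Type*} {R : I → J → ℝ} {A : K → J → ℝ} {JI : Finset J} {KI : Finset K}

namespace NetData

theorem nonneg (hA : NetData A JI KI) (k : K) (j : J) : 0 ≤ A k j := by
  rcases hA.1 k j with h | h <;> simp [h]

variable [Fintype J]

theorem le_of_forall_sum_le (hA : NetData A JI KI) {v : J → ℝ} {c : ℝ} (hv : ∀ j, 0 ≤ v j)
    (h : ∀ k, ∑ j, A k j * v j ≤ c) (j : J) : v j ≤ c := by
  obtain ⟨k, hk⟩ := hA.2.2 j
  calc v j = A k j * v j := by rw [hk, one_mul]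
    _ ≤ ∑ j', A k j' * v j' :=
      Finset.single_le_sum (fun j' _ => mul_nonneg (hA.nonneg k j') (hv j')) (Finset.mem_univ j)
    _ ≤ c := h k

theorem alloc_subset_Icc (hA : NetData A JI KI) : Alloc A KI ⊆ Icc 0 1 :=
  fun _ ha => ⟨ha.1, hA.le_of_forall_sum_le ha.1 ha.2.1⟩

theorem bddAbove_image_alloc (hA : NetData A JI KI) {g : (J → ℝ) → ℝ} (hg : Continuous g) :
    BddAbove (g '' Alloc A KI) :=
  (isCompact_Icc.bddAbove_image hg.continuousOn).mono (image_mono hA.alloc_subset_Icc)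

end NetData

variable [Fintype J]

theorem SPPfeas.mem_alloc {ρ : ℝ} {x : J → ℝ} (hx : SPPfeas R A KI ρ x) (hρ : ρ ≤ 1) :
    x ∈ Alloc A KI := by
  obtain ⟨-, hin, hserv, hnonneg⟩ := hx
  refine ⟨hnonneg, fun k => ?_, hin⟩
  by_cases hk : k ∈ KI
  · exact (hin k hk).le
  · exact (hserv k hk).trans hρ

/-- A feasible plan of the static planning problem is an allocation with zero pressure. -/
theorem sSup_pressure_nonneg [Fintype I] (hA : NetData A JI KI) {x : J → ℝ}
    (hx : SPPfeas R A KI 1 x) (w : I → ℝ) :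
    0 ≤ sSup ((fun a => ∑ i, w i * ∑ j, R i j * a j) '' Alloc A KI) := by
  have hbdd := hA.bddAbove_image_alloc (g := fun a => ∑ i, w i * ∑ j, R i j * a j)
    (by fun_prop)
  have hzero : ∑ i, w i * ∑ j, R i j * x j = 0 := by simp [hx.1]
  exact hzero ▸ le_csSup hbdd ⟨x, hx.mem_alloc le_rfl, rfl⟩

end StaticPlanning

namespace FluidSol

variable {I J K : Type*} [Fintype I] [Fintype J] [Fintype K] [DecidableEq J] [DecidableEq K]
  {R : I → J → ℝ} {A : K → J → ℝ} {JI : Finset J} {KI : Finset K}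
  {α : I → ℝ} {Z : ℝ → I → ℝ} {T : ℝ → J → ℝ}

theorem lipschitzOnWith (hA : NetData A JI KI) (hF : FluidSol R A KI α Z T) (j : J) :
    LipschitzOnWith 1 (fun t => T t j) (Ici 0) := by
  obtain ⟨-, -, -, hcap, hmono, -, -⟩ := hF
  refine LipschitzOnWith.of_le_add fun t ht s hs => ?_
  rcases le_total t s with hts | hst
  · linarith [hmono t s ht hts j, dist_nonneg (x := t) (y := s)]
  · have hinc := hA.le_of_forall_sum_le (fun j => sub_nonneg.2 (hmono s t hs hst j))
      (hcap s t hs hst) j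
    rw [Real.dist_eq, abs_of_nonneg (sub_nonneg.2 hst)]
    linarith

theorem hasDerivAt_Z (hF : FluidSol R A KI α Z T) {t : ℝ} (ht : 0 < t) {T' : J → ℝ}
    (hT : ∀ j, HasDerivAt (fun s => T s j) (T' j) t) (i : I) :
    HasDerivAt (fun s => Z s i) (-∑ j, R i j * T' j) t := by
  have hlin : HasDerivAt (fun s => Z 0 i - ∑ j, R i j * T s j) (-∑ j, R i j * T' j) t := by
    simpa using (HasDerivAt.fun_sum fun j _ => (hT j).const_mul (R i j)).const_sub (Z 0 i)
  refine hlin.congr_of_eventuallyEq ?_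
  filter_upwards [Ioi_mem_nhds ht] with s hs using hF.1 s (le_of_lt hs) i

/-- By the maximum pressure condition the derivative is `-2` times the maximal pressure. -/
theorem deriv_lyapunov_nonpos (hA : NetData A JI KI) {x : J → ℝ} (hx : SPPfeas R A KI 1 x)
    (hF : FluidSol R A KI α Z T) {t : ℝ} (ht : 0 < t)
    (hT : ∀ j, DifferentiableAt ℝ (fun s => T s j) t) :
    deriv (fun s => ∑ i, α i * Z s i ^ 2) t ≤ 0 := by
  set T' : J → ℝ := fun j => deriv (fun s => T s j) t
  have hT' : ∀ j, HasDerivAt (fun s => T s j) (T' j) t := fun j => (hT j).hasDerivAt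
  have hZ' := hF.hasDerivAt_Z ht hT'
  obtain ⟨-, -, -, -, -, -, hmaxPressure⟩ := hF
  have hmax := hmaxPressure t ht _ T' hZ' hT'
  rw [(HasDerivAt.fun_sum fun i _ => ((hZ' i).fun_pow 2).const_mul (α i)).deriv]
  calc ∑ i, α i * ((2 : ℕ) * Z t i ^ (2 - 1) * -∑ j, R i j * T' j)
      = -2 * ∑ i, α i * Z t i * ∑ j, R i j * T' j := by
        rw [Finset.mul_sum]
        exact Finset.sum_congr rfl fun i _ => by push_cast; ring
    _ ≤ 0 := by
        rw [hmax]
        linarith [sSup_pressure_nonneg hA hx fun i => α i * Z t i]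

theorem lyapunov_le (hA : NetData A JI KI) {x : J → ℝ} (hx : SPPfeas R A KI 1 x)
    (hF : FluidSol R A KI α Z T) {t : ℝ} (ht : 0 ≤ t) :
    ∑ i, α i * Z t i ^ 2 ≤ ∑ i, α i * Z 0 i ^ 2 := by
  have hT : ∀ j, AbsolutelyContinuousOnInterval (fun s => T s j) 0 t := fun j =>
    ((hF.lipschitzOnWith hA j).mono (uIcc_of_le ht ▸ Icc_subset_Ici_self)
      ).absolutelyContinuousOnInterval
  have hZ : ∀ i, AbsolutelyContinuousOnInterval (fun s => Z s i) 0 t := fun i =>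
    ((AbsolutelyContinuousOnInterval.const (Z 0 i)).fun_sub
      (AbsolutelyContinuousOnInterval.finset_sum _ fun j _ => (hT j).const_mul (R i j))).congr
      fun s hs => (hF.1 s (uIcc_of_le ht ▸ hs).1 i).symm
  have hV : AbsolutelyContinuousOnInterval (fun s => ∑ i, α i * Z s i ^ 2) 0 t :=
    AbsolutelyContinuousOnInterval.finset_sum _ fun i _ => by
      simpa only [sq] using ((hZ i).fun_mul (hZ i)).const_mul (α i)
  refine hV.le_of_ae_deriv_nonpos ht ?_
  filter_upwards [ae_all_iff.2 fun j => (hT j).ae_differentiableAt] with s hs hmem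
  exact hF.deriv_lyapunov_nonpos hA hx hmem.1 fun j =>
    hs j (Icc_subset_uIcc (Set.Ioo_subset_Icc_self hmem))

theorem Z_eq_zero (hA : NetData A JI KI) {x : J → ℝ} (hx : SPPfeas R A KI 1 x)
    (hα : ∀ i, 0 < α i) (hF : FluidSol R A KI α Z T) (hZ0 : ∀ i, Z 0 i = 0) {t : ℝ}
    (ht : 0 ≤ t) (i : I) : Z t i = 0 := by
  have hterm : ∀ i ∈ Finset.univ, 0 ≤ α i * Z t i ^ 2 := fun i _ =>
    mul_nonneg (hα i).le (sq_nonneg _)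
  have hsum : ∑ i, α i * Z t i ^ 2 = 0 :=
    le_antisymm (by simpa [hZ0] using hF.lyapunov_le hA hx ht) (Finset.sum_nonneg hterm)
  simpa [(hα i).ne'] using (Finset.sum_eq_zero_iff_of_nonneg hterm).1 hsum i (Finset.mem_univ i)

theorem sppFeas_div (hF : FluidSol R A KI α Z T) {t : ℝ} (ht : 0 < t)
    (hZ : ∀ i, Z t i = Z 0 i) : SPPfeas R A KI 1 (fun j => T t j / t) := by
  obtain ⟨hZT, -, hin, hcap, hmono, hT0, -⟩ := hF
  have hdiv : ∀ c : J → ℝ, ∑ j, c j * (T t j / t) = (∑ j, c j * T t j) / t := fun c => by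
    simp only [← mul_div_assoc, Finset.sum_div]
  have hload : ∀ k, ∑ j, A k j * (T t j - T 0 j) = ∑ j, A k j * T t j := fun k => by
    simp [hT0]
  refine ⟨fun i => ?_, fun k hk => ?_, fun k _ => ?_, fun j => ?_⟩
  · have hRT : ∑ j, R i j * T t j = 0 := by linarith [hZT t ht.le i, hZ i]
    rw [hdiv, hRT, zero_div]
  · rw [hdiv, ← hload, hin 0 t le_rfl ht.le k hk, sub_zero, div_self ht.ne']
  · rw [hdiv, div_le_one ht, ← hload]
    simpa using hcap 0 t le_rfl ht.le k
  · exact div_nonneg (hT0 j ▸ hmono 0 t le_rfl ht.le j) ht.le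

end FluidSol

/-- Weak stability of the fluid model under a maximum pressure policy
(used in the proof of Theorem 1): if `Z̄(0) = 0` then `Z̄(t) = 0` and
`T̄(t) = x* t` for all `t ≥ 0`. -/
theorem fluid_weak_stability {I J K : Type*} [Fintype I] [Fintype J] [Fintype K] [DecidableEq J] [DecidableEq K]
    (R : I → J → ℝ) (A : K → J → ℝ) (JI : Finset J) (KI : Finset K)
    (hND : NetData A JI KI)
    (α : I → ℝ) (hα : ∀ i, 0 < α i)
    (xstar : J → ℝ) (hSPP : SPPuniqueOpt R A KI 1 xstar)
    (Z : ℝ → I → ℝ) (T : ℝ → J → ℝ) (hfluid : FluidSol R A KI α Z T)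
    (hZ0 : ∀ i, Z 0 i = 0) :
    (∀ t, 0 ≤ t → ∀ i, Z t i = 0) ∧
    ∀ t, 0 ≤ t → ∀ j, T t j = xstar j * t := by
  obtain ⟨⟨hfeas, hmin⟩, huniq⟩ := hSPP
  have hZ : ∀ t, 0 ≤ t → ∀ i, Z t i = 0 := fun t ht =>
    hfluid.Z_eq_zero hND hfeas hα hZ0 ht
  refine ⟨hZ, fun t ht j => ?_⟩
  rcases ht.eq_or_lt with rfl | ht
  · obtain ⟨-, -, -, -, -, hT0, -⟩ := hfluid
    simp [hT0 j]
  have hplan : SPPopt R A KI 1 (fun j => T t j / t) :=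
    ⟨hfluid.sppFeas_div ht fun i => by rw [hZ t ht.le, hZ0], hmin⟩
  have hxj : T t j / t = xstar j := congrFun (huniq 1 _ hplan).2 j
  rw [← hxj, div_mul_cancel₀ _ ht.ne']
end
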